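/- arXiv:1309.0965 — 3 statements merged into one kernel-verified Lean document; each statement's English description precedes it below -/
import Mathlib

section
/- Let c ∈ R, c ≠ 0, d ≥ 1, f(x) = e^{πi c|x|^2}, and g(x) = e^{-π|x|^2}. Then |V_g f(x,ξ)| = (1+c^2)^{-d/4} e^{-π|ξ - cx|^2/(1+c^2)} for all (x,ξ) ∈ R^{2d}, and consequently WF_G(f) = {(x,ξ) : x ≠ 0, ξ = cx}. -/
open MeasureTheory Real Complex RealInnerProductSpace

/-- The short-time Fourier transform. -/
noncomputable def STFT (d : ℕ) (g f : EuclideanSpace ℝ (Fin d) → ℂ)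
    (x ξ : EuclideanSpace ℝ (Fin d)) : ℂ :=
  ∫ t : EuclideanSpace ℝ (Fin d), f t * (starRingEnd ℂ) (g (t - x)) *
    Complex.exp (-2 * π * Complex.I * (⟪ξ, t⟫ : ℝ))

/-- The Gabor wave front set of `f` with respect to the window `g`. -/
def GaborWF (d : ℕ) (g f : EuclideanSpace ℝ (Fin d) → ℂ) :
    Set (EuclideanSpace ℝ (Fin d) × EuclideanSpace ℝ (Fin d)) :=
  {z₁ | z₁ ≠ 0 ∧ ¬ ∃ Γ : Set (EuclideanSpace ℝ (Fin d) × EuclideanSpace ℝ (Fin d)),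
    IsOpen Γ ∧ (∀ z ∈ Γ, ∀ l : ℝ, 0 < l → l • z ∈ Γ) ∧ z₁ ∈ Γ ∧
    ∀ r : ℝ, 0 < r → ∃ C : ℝ, ∀ z ∈ Γ,
      ‖STFT d g f z.1 z.2‖ ≤ C * (1 + ‖z‖ ^ 2) ^ (-r / 2)}


/-! Substituting `t = s + x` writes `V_g f(x, ξ)` as a unimodular phase times the complex Gaussian
integral `∫ exp(-π(1 - ic)|s|² - 2πi⟪ξ - cx, s⟫) ds`, whose closed form has modulus
`(1 + c²)^{-d/4} exp(-π|ξ - cx|² / (1 + c²))`. For any STFT of the form `A exp(-a|Lz|²)` with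
`L` linear, a cone `{δ|z| < |Lz|}` around a point off `ker L` carries Gaussian decay in `|z|`,
whereas along a ray inside `ker L` the STFT is the nonzero constant `A`, so no cone around such a
point admits even `⟨z⟩⁻¹` decay. -/

open Filter Topology

lemma stft_eq_integral_comp_add (d : ℕ) (g f : EuclideanSpace ℝ (Fin d) → ℂ)
    (x ξ : EuclideanSpace ℝ (Fin d)) :
    STFT d g f x ξ = ∫ s : EuclideanSpace ℝ (Fin d),
      f (s + x) * starRingEnd ℂ (g s) * Complex.exp (-2 * π * Complex.I * (⟪ξ, s + x⟫ : ℝ)) := by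
  rw [STFT, ← integral_add_right_eq_self _ x]
  simp only [add_sub_cancel_right]

lemma chirp_mul_conj_gaussian (d : ℕ) (c : ℝ) (x ξ s : EuclideanSpace ℝ (Fin d)) :
    Complex.exp (π * Complex.I * c * (‖s + x‖ : ℂ) ^ 2) *
        starRingEnd ℂ (Complex.exp (-(π : ℂ) * (‖s‖ : ℂ) ^ 2)) *
        Complex.exp (-2 * π * Complex.I * (⟪ξ, s + x⟫ : ℝ)) =
      Complex.exp (π * Complex.I * c * (‖x‖ : ℂ) ^ 2 - 2 * π * Complex.I * (⟪ξ, x⟫ : ℝ)) *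
        Complex.exp (-(π * (1 - Complex.I * c)) * (‖s‖ : ℂ) ^ 2
          + (-2 * π * Complex.I) * (⟪ξ - c • x, s⟫ : ℝ)) := by
  have hnorm : ‖s + x‖ ^ 2 = ‖s‖ ^ 2 + 2 * ⟪x, s⟫ + ‖x‖ ^ 2 := by
    rw [norm_add_sq_real, real_inner_comm]
  have hinner : ⟪ξ - c • x, s⟫ = ⟪ξ, s⟫ - c * ⟪x, s⟫ := by
    rw [inner_sub_left, real_inner_smul_left]
  rw [← Complex.exp_conj, map_mul, map_neg, map_pow, Complex.conj_ofReal, Complex.conj_ofReal,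
    ← Complex.exp_add, ← Complex.exp_add, ← Complex.exp_add, inner_add_right, hinner]
  congr 1
  have := congrArg (fun r : ℝ => (r : ℂ)) hnorm
  push_cast at this ⊢
  rw [this]
  ring

lemma normSq_one_sub_I_mul (c : ℝ) : Complex.normSq (1 - Complex.I * c) = 1 + c ^ 2 := by
  simp [Complex.normSq_apply, sq]

lemma stft_chirp_gaussian (d : ℕ) (c : ℝ) (x ξ : EuclideanSpace ℝ (Fin d)) :
    STFT d (fun v => Complex.exp (-(π : ℂ) * (‖v‖ : ℂ) ^ 2))
        (fun v => Complex.exp ((π : ℂ) * Complex.I * (c : ℂ) * (‖v‖ : ℂ) ^ 2)) x ξ =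
      Complex.exp (π * Complex.I * c * (‖x‖ : ℂ) ^ 2 - 2 * π * Complex.I * (⟪ξ, x⟫ : ℝ)) *
        ((1 - Complex.I * c)⁻¹ ^ ((d : ℂ) / 2) *
          Complex.exp (-π * (‖ξ - c • x‖ : ℂ) ^ 2 / (1 - Complex.I * c))) := by
  have hb : 0 < (π * (1 - Complex.I * c)).re := by simp [pi_pos]
  simp_rw [stft_eq_integral_comp_add, chirp_mul_conj_gaussian, integral_const_mul,
    GaussianFourier.integral_cexp_neg_mul_sq_norm_add_of_euclideanSpace hb, Fintype.card_fin]
  congr 3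
  · field_simp
  · field_simp
    ring_nf
    simp only [Complex.I_sq]
    ring

lemma norm_stft_chirp_gaussian (d : ℕ) (c : ℝ) (x ξ : EuclideanSpace ℝ (Fin d)) :
    ‖STFT d (fun v => Complex.exp (-(π : ℂ) * (‖v‖ : ℂ) ^ 2))
        (fun v => Complex.exp ((π : ℂ) * Complex.I * (c : ℂ) * (‖v‖ : ℂ) ^ 2)) x ξ‖
      = (1 + c ^ 2) ^ (-(d : ℝ) / 4) * Real.exp (-π * ‖ξ - c • x‖ ^ 2 / (1 + c ^ 2)) := by
  have h1c : 0 < 1 + c ^ 2 := by positivity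
  have hphase : ‖Complex.exp (π * Complex.I * c * (‖x‖ : ℂ) ^ 2
      - 2 * π * Complex.I * (⟪ξ, x⟫ : ℝ))‖ = 1 := by
    rw [Complex.norm_exp]; simp [← Complex.ofReal_pow]
  have hpow : ‖(1 - Complex.I * c)⁻¹ ^ ((d : ℂ) / 2)‖ = (1 + c ^ 2) ^ (-(d : ℝ) / 4) := by
    rw [show (d : ℂ) / 2 = ((d / 2 : ℝ) : ℂ) by push_cast; rfl, norm_cpow_real, norm_inv,
      Complex.norm_def, normSq_one_sub_I_mul, Real.sqrt_eq_rpow, ← Real.rpow_neg_one,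
      ← Real.rpow_mul h1c.le, ← Real.rpow_mul h1c.le]
    ring_nf
  have hgauss : ‖Complex.exp (-π * (‖ξ - c • x‖ : ℂ) ^ 2 / (1 - Complex.I * c))‖
      = Real.exp (-π * ‖ξ - c • x‖ ^ 2 / (1 + c ^ 2)) := by
    rw [Complex.norm_exp, div_eq_mul_inv, ← Complex.ofReal_pow, ← Complex.ofReal_neg,
      ← Complex.ofReal_mul, Complex.re_ofReal_mul, Complex.inv_re, normSq_one_sub_I_mul]
    simp [div_eq_mul_inv]
  rw [stft_chirp_gaussian, norm_mul, norm_mul, hphase, hpow, hgauss, one_mul]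

lemma exists_exp_neg_mul_le_mul_rpow {a : ℝ} (ha : 0 < a) (r : ℝ) :
    ∃ C : ℝ, ∀ s : ℝ, 0 ≤ s → Real.exp (-(a * s)) ≤ C * (1 + s) ^ (-r) := by
  obtain ⟨n, hn⟩ := exists_nat_ge r
  refine ⟨Real.exp a * n.factorial / a ^ n, fun s hs => ?_⟩
  have hs₁ : 0 < 1 + s := by linarith
  calc Real.exp (-(a * s)) = Real.exp a * (Real.exp (a * (1 + s)))⁻¹ := by
        rw [← Real.exp_neg, ← Real.exp_add]; ring_nf
    _ ≤ Real.exp a * ((a * (1 + s)) ^ n / n.factorial)⁻¹ := by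
        gcongr
        exact Real.pow_div_factorial_le_exp _ (by positivity) n
    _ = Real.exp a * n.factorial / a ^ n * (1 + s) ^ (-(n : ℝ)) := by
        rw [Real.rpow_neg hs₁.le, Real.rpow_natCast, mul_pow]
        field_simp
    _ ≤ Real.exp a * n.factorial / a ^ n * (1 + s) ^ (-r) := by
        have : (1 + s) ^ (-(n : ℝ)) ≤ (1 + s) ^ (-r) :=
          Real.rpow_le_rpow_of_exponent_le (by linarith) (by linarith)
        gcongr

section

variable {d : ℕ} {g f : EuclideanSpace ℝ (Fin d) → ℂ} {F : Type*} [NormedAddCommGroup F]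
  [NormedSpace ℝ F] (L : EuclideanSpace ℝ (Fin d) × EuclideanSpace ℝ (Fin d) →L[ℝ] F) {A a : ℝ}

lemma notMem_gaborWF_of_apply_ne_zero (ha : 0 < a)
    (hV : ∀ z, ‖STFT d g f z.1 z.2‖ = A * Real.exp (-(a * ‖L z‖ ^ 2)))
    {z₀ : EuclideanSpace ℝ (Fin d) × EuclideanSpace ℝ (Fin d)} (hz₀ : L z₀ ≠ 0) :
    z₀ ∉ GaborWF d g f := by
  have hA : 0 ≤ A :=
    (mul_nonneg_iff_of_pos_right (Real.exp_pos _)).1 (hV z₀ ▸ norm_nonneg _)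
  obtain ⟨δ, hδ, hδz₀⟩ := exists_pos_mul_lt (norm_pos_iff.2 hz₀) ‖z₀‖
  refine fun hmem => hmem.2 ⟨{z | δ * ‖z‖ < ‖L z‖}, isOpen_lt (by fun_prop) (by fun_prop),
    fun z hz l hl => ?_, by simpa [mul_comm] using hδz₀, fun r hr => ?_⟩
  · simp only [Set.mem_ofPred_eq, map_smul, norm_smul, Real.norm_eq_abs, abs_of_pos hl] at hz ⊢
    nlinarith
  · obtain ⟨C, hC⟩ := exists_exp_neg_mul_le_mul_rpow (mul_pos ha (pow_pos hδ 2)) (r / 2)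
    refine ⟨A * C, fun z hz => ?_⟩
    calc ‖STFT d g f z.1 z.2‖ = A * Real.exp (-(a * ‖L z‖ ^ 2)) := hV z
      _ ≤ A * Real.exp (-(a * (δ * ‖z‖) ^ 2)) := by
        gcongr
        exact hz.le
      _ ≤ A * (C * (1 + ‖z‖ ^ 2) ^ (-(r / 2))) := by
        gcongr
        rw [mul_pow, ← mul_assoc]
        exact hC _ (sq_nonneg _)
      _ = A * C * (1 + ‖z‖ ^ 2) ^ (-r / 2) := by rw [neg_div, mul_assoc]

lemma mem_gaborWF_of_apply_eq_zero (hA : 0 < A)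
    (hV : ∀ z, ‖STFT d g f z.1 z.2‖ = A * Real.exp (-(a * ‖L z‖ ^ 2)))
    {z₀ : EuclideanSpace ℝ (Fin d) × EuclideanSpace ℝ (Fin d)} (hz₀ : z₀ ≠ 0) (hL : L z₀ = 0) :
    z₀ ∈ GaborWF d g f := by
  refine ⟨hz₀, ?_⟩
  rintro ⟨Γ, -, hcone, hz₀Γ, hdecay⟩
  obtain ⟨C, hC⟩ := hdecay 1 one_pos
  have hray : ∀ l : ℝ, 0 < l → A ≤ C * (1 + ‖l • z₀‖ ^ 2) ^ (-(1 / 2) : ℝ) := fun l hl => by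
    simpa [hL, neg_div] using (hV (l • z₀)).symm.trans_le (hC _ (hcone z₀ hz₀Γ l hl))
  have hlim : Tendsto (fun l : ℝ => C * (1 + ‖l • z₀‖ ^ 2) ^ (-(1 / 2) : ℝ)) atTop (𝓝 0) := by
    have hnorm : Tendsto (fun l : ℝ => ‖l • z₀‖) atTop atTop := by
      simp only [norm_smul, Real.norm_eq_abs]
      exact tendsto_abs_atTop_atTop.atTop_mul_const (norm_pos_iff.2 hz₀)
    simpa using ((tendsto_rpow_neg_atTop (by norm_num : (0 : ℝ) < 1 / 2)).comp
      (tendsto_atTop_add_const_left _ 1 ((tendsto_pow_atTop two_ne_zero).comp hnorm))).const_mul C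
  obtain ⟨l, hlA, hl⟩ := ((hlim.eventually (gt_mem_nhds hA)).and (eventually_gt_atTop 0)).exists
  exact (hray l hl).not_gt hlA

theorem gaborWF_eq_of_norm_stft_eq (hA : 0 < A) (ha : 0 < a)
    (hV : ∀ z, ‖STFT d g f z.1 z.2‖ = A * Real.exp (-(a * ‖L z‖ ^ 2))) :
    GaborWF d g f = {z | z ≠ 0 ∧ L z = 0} := by
  ext z
  refine ⟨fun hz => ⟨hz.1, ?_⟩, fun ⟨hz, hL⟩ => mem_gaborWF_of_apply_eq_zero L hA hV hz hL⟩
  by_contra hL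
  exact notMem_gaborWF_of_apply_ne_zero L ha hV hL hz

end

theorem gaborWF_chirp_general (d : ℕ) (c : ℝ) :
    (∀ x ξ : EuclideanSpace ℝ (Fin d),
      ‖STFT d (fun v => Complex.exp (-(π : ℂ) * (‖v‖ : ℂ) ^ 2))
          (fun v => Complex.exp ((π : ℂ) * Complex.I * (c : ℂ) * (‖v‖ : ℂ) ^ 2)) x ξ‖
        = (1 + c ^ 2) ^ (-(d : ℝ) / 4) *
            Real.exp (-π * ‖ξ - c • x‖ ^ 2 / (1 + c ^ 2))) ∧
    GaborWF d (fun v => Complex.exp (-(π : ℂ) * (‖v‖ : ℂ) ^ 2))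
        (fun v => Complex.exp ((π : ℂ) * Complex.I * (c : ℂ) * (‖v‖ : ℂ) ^ 2))
      = {z : EuclideanSpace ℝ (Fin d) × EuclideanSpace ℝ (Fin d) |
          z.1 ≠ 0 ∧ z.2 = c • z.1} := by
  have hV := norm_stft_chirp_gaussian d c
  refine ⟨hV, ?_⟩
  let L := ContinuousLinearMap.snd ℝ (EuclideanSpace ℝ (Fin d)) (EuclideanSpace ℝ (Fin d))
    - c • ContinuousLinearMap.fst ℝ (EuclideanSpace ℝ (Fin d)) (EuclideanSpace ℝ (Fin d))
  rw [gaborWF_eq_of_norm_stft_eq L (by positivity : 0 < (1 + c ^ 2) ^ (-(d : ℝ) / 4))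
    (by positivity : 0 < π / (1 + c ^ 2))
    fun z => by rw [hV]; congr 2; simp [L]; ring]
  ext ⟨x, ξ⟩
  simp only [Set.mem_ofPred_eq, L, sub_apply, smul_apply,
    ContinuousLinearMap.coe_snd', ContinuousLinearMap.coe_fst', sub_eq_zero]
  by_cases hx : x = 0 <;> simp [hx]

/-- For the chirp `f(x) = e^{πic|x|²}`, `c ≠ 0`, and the Gaussian window
`g(x) = e^{-π|x|²}`: `|V_g f(x,ξ)| = (1+c²)^{-d/4} e^{-π|ξ-cx|²/(1+c²)}`, and
consequently `WF_G(f) = {(x,ξ) : x ≠ 0, ξ = cx}`. -/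
theorem gaborWF_chirp (d : ℕ) (hd : 0 < d) (c : ℝ) (hc : c ≠ 0) :
    (∀ x ξ : EuclideanSpace ℝ (Fin d),
      ‖STFT d (fun v => Complex.exp (-(π : ℂ) * (‖v‖ : ℂ) ^ 2))
          (fun v => Complex.exp ((π : ℂ) * Complex.I * (c : ℂ) * (‖v‖ : ℂ) ^ 2)) x ξ‖
        = (1 + c ^ 2) ^ (-(d : ℝ) / 4) *
            Real.exp (-π * ‖ξ - c • x‖ ^ 2 / (1 + c ^ 2))) ∧
    GaborWF d (fun v => Complex.exp (-(π : ℂ) * (‖v‖ : ℂ) ^ 2))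
        (fun v => Complex.exp ((π : ℂ) * Complex.I * (c : ℂ) * (‖v‖ : ℂ) ^ 2))
      = {z : EuclideanSpace ℝ (Fin d) × EuclideanSpace ℝ (Fin d) |
          z.1 ≠ 0 ∧ z.2 = c • z.1} :=
  gaborWF_chirp_general d c
end

section
/- Let s > 2d, 0 ≤ r < s - 2d, χ: R^{2d} → R^{2d} a bi-Lipschitz bijection, and μ a v_r-moderate weight on R^{2d}. If K is a kernel with |K(w,z)| ≤ C ⟨z - χ(w)⟩^{-s}, then the operator T F(z) = ∫ K(w,z) F(w) dw is bounded from the weighted space L^p_{μ∘χ}(R^{2d}) to L^p_μ(R^{2d}) for every 1 ≤ p ≤ ∞. -/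
/-!
Moderateness gives `μ z ≤ Cμ ⟨z - χ w⟩^r μ (χ w)`, so the operator conjugated by the weights
has a kernel dominated by `c ⟨z - χ w⟩^(r - s)`. As `s - r > 2d`, this kernel is integrable in `z`
for fixed `w` (a translate of `⟨·⟩^(r - s)`) and in `w` for fixed `z` (bi-Lipschitz substitution:
`⟨z - χ w⟩ ≳ ⟨χ⁻¹ z - w⟩`), and Schur's test bounds it on every `L^p`, `1 ≤ p ≤ ∞`.
The weight `μ` need not be measurable, so Schur's test is run on a measurable minorant of the
weighted input with the same set integrals; against a measurable finite kernel it integrates alike.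
-/

open MeasureTheory ENNReal NNReal

open Function Module

namespace MeasureTheory

variable {α β : Type*} [MeasurableSpace α] [MeasurableSpace β] {μ : Measure α} {ν : Measure β}

theorem lintegral_mul_le_of_setLIntegral_le {f H H₀ : α → ℝ≥0∞} (hf : Measurable f)
    (hf_ne_top : ∀ x, f x ≠ ∞) (hH₀ : Measurable H₀)
    (h : ∀ s, MeasurableSet s → ∫⁻ x in s, H x ∂μ ≤ ∫⁻ x in s, H₀ x ∂μ) :
    ∫⁻ x, f x * H x ∂μ ≤ ∫⁻ x, f x * H₀ x ∂μ := by
  rw [← iSup_lintegral_measurable_le_eq_lintegral]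
  refine iSup₂_le fun φ hφ => iSup_le fun hφ_le => ?_
  have hφ_eq : ∀ x, φ x = f x * (φ / f) x := fun x => by
    rcases eq_or_ne (f x) 0 with h0 | h0
    · simpa [h0] using hφ_le x
    · rw [Pi.div_apply, ENNReal.mul_div_cancel h0 (hf_ne_top x)]
  have hψ_le : φ / f ≤ H := fun x =>
    ENNReal.div_le_of_le_mul ((hφ_le x).trans_eq (mul_comm _ _))
  have hdens : μ.withDensity (φ / f) ≤ μ.withDensity H₀ :=
    Measure.le_iff.2 fun s hs => by
      rw [withDensity_apply _ hs, withDensity_apply _ hs]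
      exact (setLIntegral_mono' hs fun x _ => hψ_le x).trans (h s hs)
  calc ∫⁻ x, φ x ∂μ = ∫⁻ x, f x ∂μ.withDensity (φ / f) := by
        rw [lintegral_withDensity_eq_lintegral_mul _ (hφ.div hf) hf]
        exact lintegral_congr fun x => (hφ_eq x).trans (mul_comm _ _)
    _ ≤ ∫⁻ x, f x ∂μ.withDensity H₀ := lintegral_mono' hdens le_rfl
    _ = ∫⁻ x, f x * H₀ x ∂μ := by
        rw [lintegral_withDensity_eq_lintegral_mul _ hH₀ hf]
        exact lintegral_congr fun x => mul_comm _ _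

theorem rpow_lintegral_mul_le {f H : α → ℝ≥0∞} (hf : AEMeasurable f μ) (hH : AEMeasurable H μ)
    {p : ℝ} (hp : 1 ≤ p) :
    (∫⁻ x, f x * H x ∂μ) ^ p ≤ (∫⁻ x, f x ∂μ) ^ (p - 1) * ∫⁻ x, f x * H x ^ p ∂μ := by
  have hp0 : 0 < p := zero_lt_one.trans_le hp
  have hq : 0 ≤ 1 - p⁻¹ := sub_nonneg.2 (inv_le_one_of_one_le₀ hp)
  have hsplit : ∀ x, f x ^ (1 - p⁻¹) * (f x * H x ^ p) ^ p⁻¹ = f x * H x := fun x => by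
    rw [ENNReal.mul_rpow_of_nonneg _ _ (inv_nonneg.2 hp0.le), ← ENNReal.rpow_mul,
      mul_inv_cancel₀ hp0.ne', ENNReal.rpow_one, ← mul_assoc,
      ← ENNReal.rpow_add_of_nonneg _ _ hq (inv_nonneg.2 hp0.le), sub_add_cancel, ENNReal.rpow_one]
  have holder := lintegral_mul_norm_pow_le hf (hf.mul (hH.pow_const p)) hq
    (inv_nonneg.2 hp0.le) (sub_add_cancel 1 p⁻¹)
  simp only [Pi.mul_apply, hsplit] at holder
  calc (∫⁻ x, f x * H x ∂μ) ^ p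
      ≤ ((∫⁻ x, f x ∂μ) ^ (1 - p⁻¹) * (∫⁻ x, f x * H x ^ p ∂μ) ^ p⁻¹) ^ p :=
        ENNReal.rpow_le_rpow holder hp0.le
    _ = (∫⁻ x, f x ∂μ) ^ (p - 1) * ∫⁻ x, f x * H x ^ p ∂μ := by
        rw [ENNReal.mul_rpow_of_nonneg _ _ hp0.le, ← ENNReal.rpow_mul, ← ENNReal.rpow_mul,
          sub_mul, inv_mul_cancel₀ hp0.ne', one_mul, ENNReal.rpow_one]

theorem enorm_mul_integral_le_lintegral {𝕜 : Type*} [RCLike 𝕜] {a : 𝕜} {κ b F : α → 𝕜}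
    {k : α → ℝ≥0∞}
    (h : ∀ w, ‖a * κ w‖ₑ ≤ k w * ‖b w‖ₑ) :
    ‖a * ∫ w, κ w * F w ∂μ‖ₑ ≤ ∫⁻ w, k w * ‖b w * F w‖ₑ ∂μ :=
  calc ‖a * ∫ w, κ w * F w ∂μ‖ₑ ≤ ‖a‖ₑ * ∫⁻ w, ‖κ w * F w‖ₑ ∂μ := by
        rw [enorm_mul]; gcongr; exact enorm_integral_le_lintegral_enorm _
    _ = ∫⁻ w, ‖a * κ w‖ₑ * ‖F w‖ₑ ∂μ := by
        rw [← lintegral_const_mul' _ _ enorm_ne_top]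
        exact lintegral_congr fun w => by rw [enorm_mul, enorm_mul, mul_assoc]
    _ ≤ ∫⁻ w, k w * ‖b w * F w‖ₑ ∂μ := lintegral_mono fun w => by
        rw [enorm_mul (b w), ← mul_assoc]
        exact mul_le_mul_left (h w) _

variable {k : α → β → ℝ≥0∞} {A : ℝ≥0∞}

theorem lintegral_rpow_lintegral_kernel_le [SFinite μ] [SFinite ν]
    (hk : Measurable (uncurry k)) (h_row : ∀ z, ∫⁻ w, k w z ∂μ ≤ A)
    (h_col : ∀ w, ∫⁻ z, k w z ∂ν ≤ A) {H : α → ℝ≥0∞} (hH : Measurable H) {p : ℝ} (hp : 1 ≤ p) :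
    ∫⁻ z, (∫⁻ w, k w z * H w ∂μ) ^ p ∂ν ≤ A ^ p * ∫⁻ w, H w ^ p ∂μ := by
  have hHp : Measurable fun w => H w ^ p := hH.pow_const p
  have hkH : Measurable (uncurry fun w z => k w z * H w ^ p) :=
    hk.mul (hHp.comp measurable_fst)
  have hkH_int : Measurable fun z => ∫⁻ w, k w z * H w ^ p ∂μ := hkH.lintegral_prod_left'
  calc ∫⁻ z, (∫⁻ w, k w z * H w ∂μ) ^ p ∂ν
      ≤ ∫⁻ z, A ^ (p - 1) * ∫⁻ w, k w z * H w ^ p ∂μ ∂ν := by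
        refine lintegral_mono fun z => (rpow_lintegral_mul_le
          (hk.of_uncurry_right).aemeasurable hH.aemeasurable hp).trans ?_
        gcongr ?_ * _
        exact ENNReal.rpow_le_rpow (h_row z) (by linarith)
    _ = A ^ (p - 1) * ∫⁻ w, (∫⁻ z, k w z ∂ν) * H w ^ p ∂μ := by
        rw [lintegral_const_mul _ hkH_int, ← lintegral_lintegral_swap hkH.aemeasurable]
        congr 1
        exact lintegral_congr fun w => lintegral_mul_const _ hk.of_uncurry_left
    _ ≤ A ^ (p - 1) * ∫⁻ w, A * H w ^ p ∂μ := by gcongr with w; exact h_col w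
    _ = A ^ (p - 1) * A ^ (1 : ℝ) * ∫⁻ w, H w ^ p ∂μ := by
        rw [lintegral_const_mul _ hHp, ENNReal.rpow_one, mul_assoc]
    _ = A ^ p * ∫⁻ w, H w ^ p ∂μ := by
        rw [← ENNReal.rpow_add_of_nonneg _ _ (by linarith) zero_le_one, sub_add_cancel]

theorem eLpNorm_lintegral_kernel_le_of_measurable [SFinite μ] [SFinite ν]
    (hk : Measurable (uncurry k)) (h_row : ∀ z, ∫⁻ w, k w z ∂μ ≤ A)
    (h_col : ∀ w, ∫⁻ z, k w z ∂ν ≤ A) {H : α → ℝ≥0∞} (hH : Measurable H) {p : ℝ≥0∞}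
    (hp : 1 ≤ p) :
    eLpNorm (fun z => ∫⁻ w, k w z * H w ∂μ) p ν ≤ A * eLpNorm H p μ := by
  rcases eq_or_ne p ∞ with rfl | hp_top
  · simp only [eLpNorm_exponent_top, eLpNormEssSup, enorm_eq_self]
    refine essSup_le_of_ae_le _ (ae_of_all _ fun z => ?_)
    calc ∫⁻ w, k w z * H w ∂μ ≤ ∫⁻ w, k w z * essSup H μ ∂μ :=
          lintegral_mono_ae ((ae_le_essSup H).mono fun w hw => by gcongr)
      _ = (∫⁻ w, k w z ∂μ) * essSup H μ := lintegral_mul_const _ hk.of_uncurry_right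
      _ ≤ A * essSup H μ := by gcongr; exact h_row z
  have hq : 1 ≤ p.toReal := by
    simpa using ENNReal.toReal_mono hp_top hp
  have hq0 : 0 < p.toReal := zero_lt_one.trans_le hq
  simp only [eLpNorm_eq_lintegral_rpow_enorm_toReal (zero_lt_one.trans_le hp).ne' hp_top,
    enorm_eq_self]
  calc (∫⁻ z, (∫⁻ w, k w z * H w ∂μ) ^ p.toReal ∂ν) ^ (1 / p.toReal)
      ≤ (A ^ p.toReal * ∫⁻ w, H w ^ p.toReal ∂μ) ^ (1 / p.toReal) := by
        gcongr
        exact lintegral_rpow_lintegral_kernel_le hk h_row h_col hH hq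
    _ = A * (∫⁻ w, H w ^ p.toReal ∂μ) ^ (1 / p.toReal) := by
        rw [ENNReal.mul_rpow_of_nonneg _ _ (by positivity), ← ENNReal.rpow_mul,
          mul_one_div_cancel hq0.ne', ENNReal.rpow_one]

theorem eLpNorm_lintegral_kernel_le [SFinite μ] [SFinite ν] (hk : Measurable (uncurry k))
    (hk_ne_top : ∀ w z, k w z ≠ ∞) (h_row : ∀ z, ∫⁻ w, k w z ∂μ ≤ A)
    (h_col : ∀ w, ∫⁻ z, k w z ∂ν ≤ A) (H : α → ℝ≥0∞) {p : ℝ≥0∞} (hp : 1 ≤ p) :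
    eLpNorm (fun z => ∫⁻ w, k w z * H w ∂μ) p ν ≤ A * eLpNorm H p μ := by
  obtain ⟨H₀, hH₀, hH₀_le, hH₀_eq⟩ := exists_measurable_le_forall_setLIntegral_eq μ H
  calc eLpNorm (fun z => ∫⁻ w, k w z * H w ∂μ) p ν
      ≤ eLpNorm (fun z => ∫⁻ w, k w z * H₀ w ∂μ) p ν :=
        eLpNorm_mono_enorm fun z => by
          simpa only [enorm_eq_self] using lintegral_mul_le_of_setLIntegral_le
            hk.of_uncurry_right (hk_ne_top · z) hH₀ fun s _ => (hH₀_eq s).le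
    _ ≤ A * eLpNorm H₀ p μ := eLpNorm_lintegral_kernel_le_of_measurable hk h_row h_col hH₀ hp
    _ ≤ A * eLpNorm H p μ := by
        gcongr
        exact eLpNorm_mono_enorm fun w => by simpa only [enorm_eq_self] using hH₀_le w

end MeasureTheory

theorem Real.one_add_sq_rpow_neg_le {a b L t : ℝ} (ha : 0 ≤ a) (hab : a ≤ L * b) (ht : 0 ≤ t) :
    (1 + b ^ 2) ^ (-t / 2) ≤ max 1 (L ^ 2) ^ (t / 2) * (1 + a ^ 2) ^ (-t / 2) := by
  set M := max 1 (L ^ 2)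
  have hM : 0 < M := zero_lt_one.trans_le (le_max_left _ _)
  have hab' : 1 + a ^ 2 ≤ M * (1 + b ^ 2) := by
    nlinarith [le_max_left 1 (L ^ 2), le_max_right 1 (L ^ 2), sq_nonneg b,
      mul_self_le_mul_self ha hab]
  calc (1 + b ^ 2) ^ (-t / 2) = M ^ (t / 2) * (M * (1 + b ^ 2)) ^ (-t / 2) := by
        rw [Real.mul_rpow hM.le (by positivity), ← mul_assoc, ← Real.rpow_add hM,
          show t / 2 + -t / 2 = 0 by ring, Real.rpow_zero, one_mul]
    _ ≤ M ^ (t / 2) * (1 + a ^ 2) ^ (-t / 2) :=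
        mul_le_mul_of_nonneg_left (Real.rpow_le_rpow_of_nonpos (by positivity) hab' (by linarith))
          (by positivity)

section BracketKernel

variable {E : Type*} [NormedAddCommGroup E]

/-- `c ⟨z - χ w⟩^(-t)`, with the Japanese bracket `⟨u⟩ = (1 + ‖u‖²)^(1/2)`. -/
noncomputable def bracketKernel (χ : E → E) (c t : ℝ) (w z : E) : ℝ≥0∞ :=
  ENNReal.ofReal (c * (1 + ‖z - χ w‖ ^ 2) ^ (-t / 2))

variable {χ : E → E} {c t : ℝ}

theorem measurable_bracketKernel [MeasurableSpace E] [BorelSpace E] [SecondCountableTopology E]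
    (hχ : Measurable χ) :
    Measurable (uncurry (bracketKernel χ c t)) := by
  unfold bracketKernel
  exact ENNReal.measurable_ofReal.comp (measurable_const.mul ((measurable_const.add
    ((measurable_snd.sub (hχ.comp measurable_fst)).norm.pow_const 2)).pow_const _))

theorem enorm_weight_mul_le_bracketKernel {𝕜 : Type*} [RCLike 𝕜] {μ : E → ℝ}
    (hμ : ∀ z, 0 < μ z) {Cμ r : ℝ} (hmod : ∀ z ζ, μ (z + ζ) ≤ Cμ * (1 + ‖z‖ ^ 2) ^ (r / 2) * μ ζ)
    {K : E → E → 𝕜} {C s : ℝ} (hK : ∀ w z, ‖K w z‖ ≤ C * (1 + ‖z - χ w‖ ^ 2) ^ (-s / 2))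
    (w z : E) :
    ‖(μ z : 𝕜) * K w z‖ₑ ≤ bracketKernel χ (Cμ * C) (s - r) w z * ‖(μ (χ w) : 𝕜)‖ₑ := by
  have hbase : 0 < 1 + ‖z - χ w‖ ^ 2 := by positivity
  have hμz : μ z ≤ Cμ * (1 + ‖z - χ w‖ ^ 2) ^ (r / 2) * μ (χ w) := by
    simpa only [sub_add_cancel] using hmod (z - χ w) (χ w)
  have hreal : μ z * ‖K w z‖ ≤ Cμ * C * (1 + ‖z - χ w‖ ^ 2) ^ (-(s - r) / 2) * μ (χ w) :=
    calc μ z * ‖K w z‖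
        ≤ Cμ * (1 + ‖z - χ w‖ ^ 2) ^ (r / 2) * μ (χ w) * (C * (1 + ‖z - χ w‖ ^ 2) ^ (-s / 2)) :=
          mul_le_mul hμz (hK w z) (norm_nonneg _) ((hμ z).le.trans hμz)
      _ = Cμ * C * ((1 + ‖z - χ w‖ ^ 2) ^ (r / 2) * (1 + ‖z - χ w‖ ^ 2) ^ (-s / 2)) *
            μ (χ w) := by ring
      _ = Cμ * C * (1 + ‖z - χ w‖ ^ 2) ^ (-(s - r) / 2) * μ (χ w) := by
          rw [← Real.rpow_add hbase]; ring_nf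
  calc ‖(μ z : 𝕜) * K w z‖ₑ = ENNReal.ofReal (μ z * ‖K w z‖) := by
        rw [← ofReal_norm, norm_mul, RCLike.norm_ofReal, abs_of_pos (hμ z)]
    _ ≤ ENNReal.ofReal (Cμ * C * (1 + ‖z - χ w‖ ^ 2) ^ (-(s - r) / 2) * μ (χ w)) :=
        ENNReal.ofReal_le_ofReal hreal
    _ = bracketKernel χ (Cμ * C) (s - r) w z * ‖(μ (χ w) : 𝕜)‖ₑ := by
        rw [ENNReal.ofReal_mul' (hμ _).le, ← ofReal_norm, RCLike.norm_ofReal, abs_of_pos (hμ _)]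
        rfl

theorem exists_lintegral_bracketKernel_le [NormedSpace ℝ E] [FiniteDimensional ℝ E]
    [MeasurableSpace E] [BorelSpace E] {μ : Measure E} [μ.IsAddHaarMeasure]
    (hsurj : Surjective χ) {L : ℝ} (hlip' : ∀ a b, ‖a - b‖ ≤ L * ‖χ a - χ b‖)
    (ht : (finrank ℝ E : ℝ) < t) :
    ∃ A ≠ ∞, (∀ z, ∫⁻ w, bracketKernel χ c t w z ∂μ ≤ A) ∧
      ∀ w, ∫⁻ z, bracketKernel χ c t w z ∂μ ≤ A := by
  set g : E → ℝ≥0∞ := fun u => ENNReal.ofReal ((1 + ‖u‖ ^ 2) ^ (-t / 2))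
  set M := max 1 (L ^ 2) ^ (t / 2)
  have ht0 : 0 ≤ t := (Nat.cast_nonneg _).trans ht.le
  have hM : 1 ≤ M := Real.one_le_rpow (le_max_left _ _) (by positivity)
  have hk : ∀ w z, bracketKernel χ c t w z = ENNReal.ofReal c * g (z - χ w) := fun w z =>
    ENNReal.ofReal_mul' (by positivity)
  have hg : ∀ v w, g (χ v - χ w) ≤ ENNReal.ofReal M * g (w - v) := fun v w => by
    rw [← ENNReal.ofReal_mul (by positivity)]
    refine ENNReal.ofReal_le_ofReal (Real.one_add_sq_rpow_neg_le (norm_nonneg _) ?_ ht0)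
    rw [norm_sub_rev]
    exact hlip' v w
  have hI : ∫⁻ u, g u ∂μ ≠ ∞ := (integrable_rpow_neg_one_add_norm_sq ht).lintegral_lt_top.ne
  refine ⟨ENNReal.ofReal c * (ENNReal.ofReal M * ∫⁻ u, g u ∂μ), by finiteness,
    fun z => ?_, fun w => ?_⟩
  · obtain ⟨v, rfl⟩ := hsurj z
    calc ∫⁻ w, bracketKernel χ c t w (χ v) ∂μ
        = ENNReal.ofReal c * ∫⁻ w, g (χ v - χ w) ∂μ := by
          simp_rw [hk]; exact lintegral_const_mul' _ _ ENNReal.ofReal_ne_top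
      _ ≤ ENNReal.ofReal c * ∫⁻ w, ENNReal.ofReal M * g (w - v) ∂μ := by
          gcongr with w; exact hg v w
      _ = ENNReal.ofReal c * (ENNReal.ofReal M * ∫⁻ u, g u ∂μ) := by
          rw [lintegral_const_mul' _ _ ENNReal.ofReal_ne_top, lintegral_sub_right_eq_self g v]
  · calc ∫⁻ z, bracketKernel χ c t w z ∂μ = ENNReal.ofReal c * ∫⁻ u, g u ∂μ := by
          simp_rw [hk]
          rw [lintegral_const_mul' _ _ ENNReal.ofReal_ne_top, lintegral_sub_right_eq_self g (χ w)]
      _ ≤ ENNReal.ofReal c * (ENNReal.ofReal M * ∫⁻ u, g u ∂μ) := by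
          gcongr
          exact le_mul_of_one_le_left' (ENNReal.one_le_ofReal.2 hM)

end BracketKernel

theorem weighted_kernel_Lp_bounded_general (d : ℕ) (s r : ℝ)
    (hr : r < s - 2 * d)
    (χ : EuclideanSpace ℝ (Fin (2 * d)) → EuclideanSpace ℝ (Fin (2 * d)))
    (hbij : Function.Bijective χ) (L : ℝ)
    (hlip : ∀ a b, ‖χ a - χ b‖ ≤ L * ‖a - b‖)
    (hlip' : ∀ a b, ‖a - b‖ ≤ L * ‖χ a - χ b‖)
    (μ : EuclideanSpace ℝ (Fin (2 * d)) → ℝ) (hμ_pos : ∀ z, 0 < μ z)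
    (Cμ : ℝ)
    (hmod : ∀ z ζ, μ (z + ζ) ≤ Cμ * (1 + ‖z‖ ^ 2) ^ (r / 2) * μ ζ)
    (K : EuclideanSpace ℝ (Fin (2 * d)) → EuclideanSpace ℝ (Fin (2 * d)) → ℂ)
    (C : ℝ)
    (hK : ∀ w z, ‖K w z‖ ≤ C * (1 + ‖z - χ w‖ ^ 2) ^ (-s / 2)) :
    ∃ C' : ℝ, C' > 0 ∧ ∀ p : ℝ≥0∞, 1 ≤ p →
      ∀ F : EuclideanSpace ℝ (Fin (2 * d)) → ℂ, AEStronglyMeasurable F volume →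
        eLpNorm (fun z => (μ z : ℂ) * ∫ w, K w z * F w) p volume ≤
          ENNReal.ofReal C' * eLpNorm (fun w => (μ (χ w) : ℂ) * F w) p volume := by
  have hχ : Continuous χ :=
    (LipschitzWith.of_dist_le' fun a b => by simpa only [dist_eq_norm] using hlip a b).continuous
  obtain ⟨A, hA, h_row, h_col⟩ := exists_lintegral_bracketKernel_le (c := Cμ * C) (t := s - r)
    (μ := volume) hbij.surjective hlip' (by rw [finrank_euclideanSpace_fin]; push_cast; linarith)
  refine ⟨A.toReal + 1, by positivity, fun p hp F _ => ?_⟩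
  calc eLpNorm (fun z => (μ z : ℂ) * ∫ w, K w z * F w) p volume
      ≤ eLpNorm (fun z => ∫⁻ w, bracketKernel χ (Cμ * C) (s - r) w z *
          ‖(μ (χ w) : ℂ) * F w‖ₑ) p volume :=
        eLpNorm_mono_enorm fun z => by
          simpa only [enorm_eq_self, RCLike.ofReal_eq_complex_ofReal] using
            enorm_mul_integral_le_lintegral (enorm_weight_mul_le_bracketKernel hμ_pos hmod hK · z)
    _ ≤ A * eLpNorm (fun w => (μ (χ w) : ℂ) * F w) p volume := by
        rw [← eLpNorm_enorm (fun w => (μ (χ w) : ℂ) * F w)]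
        exact eLpNorm_lintegral_kernel_le (measurable_bracketKernel hχ.measurable)
          (fun _ _ => ENNReal.ofReal_ne_top) h_row h_col _ hp
    _ ≤ ENNReal.ofReal (A.toReal + 1) * eLpNorm (fun w => (μ (χ w) : ℂ) * F w) p volume := by
        gcongr
        exact (ENNReal.le_ofReal_iff_toReal_le hA (by positivity)).2 (by linarith)

/-- Weighted mapping theorem: a kernel dominated by `C ⟨z - χ(w)⟩^{-s}`, with `χ`
bi-Lipschitz, `s > 2d`, `0 ≤ r < s - 2d` and `μ` a `v_r`-moderate weight, defines an
operator bounded from `L^p_{μ∘χ}(ℝ^{2d})` to `L^p_μ(ℝ^{2d})` for every `1 ≤ p ≤ ∞`. -/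
theorem weighted_kernel_Lp_bounded (d : ℕ) (s r : ℝ) (hs : s > 2 * d)
    (hr0 : 0 ≤ r) (hr : r < s - 2 * d)
    (χ : EuclideanSpace ℝ (Fin (2 * d)) → EuclideanSpace ℝ (Fin (2 * d)))
    (hbij : Function.Bijective χ) (L : ℝ) (hL : 0 < L)
    (hlip : ∀ a b, ‖χ a - χ b‖ ≤ L * ‖a - b‖)
    (hlip' : ∀ a b, ‖a - b‖ ≤ L * ‖χ a - χ b‖)
    (μ : EuclideanSpace ℝ (Fin (2 * d)) → ℝ) (hμ_pos : ∀ z, 0 < μ z)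
    (Cμ : ℝ) (hCμ : 0 < Cμ)
    (hmod : ∀ z ζ, μ (z + ζ) ≤ Cμ * (1 + ‖z‖ ^ 2) ^ (r / 2) * μ ζ)
    (K : EuclideanSpace ℝ (Fin (2 * d)) → EuclideanSpace ℝ (Fin (2 * d)) → ℂ)
    (C : ℝ) (hC : 0 ≤ C) (hK_meas : Measurable (Function.uncurry K))
    (hK : ∀ w z, ‖K w z‖ ≤ C * (1 + ‖z - χ w‖ ^ 2) ^ (-s / 2)) :
    ∃ C' : ℝ, C' > 0 ∧ ∀ p : ℝ≥0∞, 1 ≤ p →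
      ∀ F : EuclideanSpace ℝ (Fin (2 * d)) → ℂ, AEStronglyMeasurable F volume →
        eLpNorm (fun z => (μ z : ℂ) * ∫ w, K w z * F w) p volume ≤
          ENNReal.ofReal C' * eLpNorm (fun w => (μ (χ w) : ℂ) * F w) p volume :=
  weighted_kernel_Lp_bounded_general d s r hr χ hbij L hlip hlip' μ hμ_pos Cμ hmod K C hK
end

section
/- Microlocal kernel estimate: let s > 2d, 0 < 2r < s - 2d, χ a bi-Lipschitz bijection of R^{2d}, F ∈ L^p_{v_{-r}}(R^{2d}) measurable, and Γ and Γ' open cones in R^{2d}\{0} such that there is c > 0 with ⟨z - χ(w)⟩ ≥ c·max{⟨z⟩, ⟨w⟩} for z ∈ Γ', w ∉ Γ. Assume additionally ∫_Γ |F(w)|^p ⟨w⟩^{pr} dw < ∞. Define G(z) = ∫_{R^{2d}} ⟨z - χ(w)⟩^{-s} |F(w)| dw. Then ∫_{Γ'} G(z)^p ⟨z⟩^{pr} dz < ∞. -/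
open MeasureTheory ENNReal

lemma young_schur {E α : Type*} [MeasurableSpace E] [MeasurableSpace α]
    (μ : Measure E) (ν : Measure α) [SFinite μ] [SFinite ν]
    (k : E → α → ℝ≥0∞) (g : α → ℝ≥0∞) (p : ℝ) (hp : 1 ≤ p)
    (hkm : Measurable (Function.uncurry k)) (hgm : Measurable g)
    (hk0 : ∀ z w, k z w ≠ 0) (hktop : ∀ z w, k z w ≠ ⊤) (hgtop : ∀ w, g w ≠ ⊤)
    (A : ℝ≥0∞) (hA : A ≠ ⊤) (hAbound : ∀ z, ∫⁻ w, k z w ∂ν ≤ A)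
    (I : ℝ≥0∞) (hI : I ≠ ⊤) (hIbound : ∀ w, ∫⁻ z, k z w ∂μ ≤ I)
    (hGp : ∫⁻ w, g w ^ p ∂ν ≠ ⊤) :
    ∫⁻ z, (∫⁻ w, k z w * g w ∂ν) ^ p ∂μ < ⊤ := by
  have hp0 : (0:ℝ) < p := lt_of_lt_of_le one_pos hp
  have hkzm : ∀ z, Measurable fun w => k z w :=
    fun z => hkm.comp (measurable_prodMk_left)
  -- Step 1 : pointwise Hölder
  have step1 : ∀ z, (∫⁻ w, k z w * g w ∂ν) ^ p
      ≤ A ^ (p - 1) * ∫⁻ w, k z w * g w ^ p ∂ν := by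
    intro z
    rcases eq_or_lt_of_le hp with hp1 | hp1
    · simp only [← hp1, sub_self, rpow_one, ENNReal.rpow_zero, one_mul]
      exact le_rfl
    · set q := p.conjExponent with hq
      have hpq : p.HolderConjugate q := Real.HolderConjugate.conjExponent hp1
      have hq0 : q ≠ 0 := ne_of_gt hpq.symm.pos
      have hqinv : 1 / q + 1 / p = 1 := by
        rw [one_div, one_div, add_comm]; exact hpq.inv_add_inv_eq_one
      have key : ∫⁻ w, k z w * g w ∂ν
          ≤ (∫⁻ w, k z w ∂ν) ^ (1/q) * (∫⁻ w, k z w * g w ^ p ∂ν) ^ (1/p) := by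
        have h1 : ∫⁻ w, k z w * g w ∂ν
            = ∫⁻ w, ((fun w => k z w ^ (1/q)) * fun w => k z w ^ (1/p) * g w) w ∂ν := by
          refine lintegral_congr fun w => ?_
          simp only [Pi.mul_apply]
          rw [← mul_assoc, ← ENNReal.rpow_add _ _ (hk0 z w) (hktop z w), hqinv,
            ENNReal.rpow_one]
        have h2 := ENNReal.lintegral_mul_le_Lp_mul_Lq ν hpq.symm
          (f := fun w => k z w ^ (1/q)) (g := fun w => k z w ^ (1/p) * g w)
          ((hkzm z).pow_const _).aemeasurable
          (((hkzm z).pow_const _).mul hgm).aemeasurable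
        rw [h1]
        refine h2.trans (le_of_eq ?_)
        congr 1
        · congr 1
          refine lintegral_congr fun w => ?_
          rw [← ENNReal.rpow_mul, one_div_mul_cancel hq0, ENNReal.rpow_one]
        · congr 1
          refine lintegral_congr fun w => ?_
          rw [ENNReal.mul_rpow_of_nonneg _ _ hp0.le, ← ENNReal.rpow_mul,
            one_div_mul_cancel (ne_of_gt hp0), ENNReal.rpow_one]
      have key2 : ∫⁻ w, k z w * g w ∂ν
          ≤ A ^ (1/q) * (∫⁻ w, k z w * g w ^ p ∂ν) ^ (1/p) :=
        key.trans (mul_le_mul_left (ENNReal.rpow_le_rpow (hAbound z) (one_div_nonneg.mpr hpq.symm.pos.le)) _)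
      calc (∫⁻ w, k z w * g w ∂ν) ^ p
          ≤ (A ^ (1/q) * (∫⁻ w, k z w * g w ^ p ∂ν) ^ (1/p)) ^ p :=
            ENNReal.rpow_le_rpow key2 hp0.le
        _ = A ^ (p - 1) * ∫⁻ w, k z w * g w ^ p ∂ν := by
            rw [ENNReal.mul_rpow_of_nonneg _ _ hp0.le, ← ENNReal.rpow_mul,
              ← ENNReal.rpow_mul, one_div_mul_cancel (ne_of_gt hp0),
              ENNReal.rpow_one]
            congr 1
            have hqeq : q = p / (p - 1) := hq
            rw [hqeq]
            have hp1' : p - 1 ≠ 0 := by linarith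
            field_simp
  -- Step 2 : integrate and use Tonelli
  have hmeas2 : Measurable (Function.uncurry fun z w => k z w * g w ^ p) :=
    hkm.mul ((hgm.pow_const _).comp measurable_snd)
  have hswap : ∫⁻ z, ∫⁻ w, k z w * g w ^ p ∂ν ∂μ
      = ∫⁻ w, ∫⁻ z, k z w * g w ^ p ∂μ ∂ν :=
    lintegral_lintegral_swap hmeas2.aemeasurable
  have hAp : A ^ (p - 1) ≠ ⊤ :=
    (ENNReal.rpow_lt_top_of_nonneg (by linarith) hA).ne
  have step2 : ∫⁻ z, (∫⁻ w, k z w * g w ∂ν) ^ p ∂μ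
      ≤ A ^ (p - 1) * (I * ∫⁻ w, g w ^ p ∂ν) := by
    calc ∫⁻ z, (∫⁻ w, k z w * g w ∂ν) ^ p ∂μ
        ≤ ∫⁻ z, A ^ (p - 1) * ∫⁻ w, k z w * g w ^ p ∂ν ∂μ := lintegral_mono step1
      _ = A ^ (p - 1) * ∫⁻ z, ∫⁻ w, k z w * g w ^ p ∂ν ∂μ :=
          lintegral_const_mul' _ _ hAp
      _ = A ^ (p - 1) * ∫⁻ w, ∫⁻ z, k z w * g w ^ p ∂μ ∂ν := by rw [hswap]
      _ ≤ A ^ (p - 1) * (I * ∫⁻ w, g w ^ p ∂ν) := by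
          refine mul_le_mul_right ?_ _
          have : ∀ w, ∫⁻ z, k z w * g w ^ p ∂μ ≤ I * g w ^ p := by
            intro w
            rw [lintegral_mul_const' _ _
              (ENNReal.rpow_lt_top_of_nonneg hp0.le (hgtop w)).ne]
            exact mul_le_mul_left (hIbound w) _
          calc ∫⁻ w, ∫⁻ z, k z w * g w ^ p ∂μ ∂ν ≤ ∫⁻ w, I * g w ^ p ∂ν :=
                lintegral_mono this
            _ = I * ∫⁻ w, g w ^ p ∂ν := lintegral_const_mul' _ _ hI
  exact lt_of_le_of_lt step2
    (ENNReal.mul_lt_top hAp.lt_top (ENNReal.mul_lt_top hI.lt_top hGp.lt_top))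

lemma peetre_aux {E : Type*} [SeminormedAddCommGroup E] (a b : E) :
    1 + ‖a‖^2 ≤ 2 * (1 + ‖a - b‖^2) * (1 + ‖b‖^2) := by
  have h : ‖a‖ ≤ ‖a - b‖ + ‖b‖ := by
    calc ‖a‖ = ‖a - b + b‖ := by rw [sub_add_cancel]
    _ ≤ ‖a - b‖ + ‖b‖ := norm_add_le _ _
  have h2 : ‖a‖^2 ≤ (‖a - b‖ + ‖b‖)^2 := pow_le_pow_left₀ (norm_nonneg a) h 2
  nlinarith [sq_nonneg (‖a - b‖ - ‖b‖), sq_nonneg (‖a - b‖ * ‖b‖),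
    norm_nonneg (a - b), norm_nonneg b]

open scoped ENNReal

set_option maxHeartbeats 2000000 in
/-- Microlocal kernel estimate (core of the propagation of the Gabor wave front set):
if `s > 2d`, `0 < 2r < s - 2d`, `χ` is a bi-Lipschitz bijection of `ℝ^{2d}`,
`F ∈ L^p_{v_{-r}}`, `Γ, Γ'` are open cones separated through `χ`
(`⟨z - χ(w)⟩ ≥ c max{⟨z⟩,⟨w⟩}` for `z ∈ Γ'`, `w ∉ Γ`) and
`∫_Γ |F(w)|^p ⟨w⟩^{pr} dw < ∞`, then
`G(z) = ∫ ⟨z - χ(w)⟩^{-s} |F(w)| dw` satisfies `∫_{Γ'} G^p ⟨z⟩^{pr} < ∞`. -/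
theorem microlocal_kernel_estimate (d : ℕ) (s r p : ℝ)
    (hs : s > 2 * d) (hr : 0 < r) (hrs : 2 * r < s - 2 * d) (hp : 1 ≤ p)
    (χ : EuclideanSpace ℝ (Fin (2 * d)) → EuclideanSpace ℝ (Fin (2 * d)))
    (hbij : Function.Bijective χ) (L : ℝ) (hL : 0 < L)
    (hlip : ∀ a b, ‖χ a - χ b‖ ≤ L * ‖a - b‖)
    (hlip' : ∀ a b, ‖a - b‖ ≤ L * ‖χ a - χ b‖)
    (F : EuclideanSpace ℝ (Fin (2 * d)) → ℂ) (hF_meas : Measurable F)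
    (hF : Integrable (fun w : EuclideanSpace ℝ (Fin (2 * d)) =>
      ‖F w‖ ^ p * (1 + ‖w‖ ^ 2) ^ (-p * r / 2)))
    (Γ Γ' : Set (EuclideanSpace ℝ (Fin (2 * d))))
    (hΓ_open : IsOpen Γ) (hΓ'_open : IsOpen Γ')
    (hΓ_cone : ∀ z ∈ Γ, ∀ l : ℝ, 0 < l → l • z ∈ Γ)
    (hΓ'_cone : ∀ z ∈ Γ', ∀ l : ℝ, 0 < l → l • z ∈ Γ')
    (c : ℝ) (hc : 0 < c)
    (hsep : ∀ z ∈ Γ', ∀ w ∉ Γ,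
      c * max ((1 + ‖z‖ ^ 2) ^ ((1:ℝ)/2)) ((1 + ‖w‖ ^ 2) ^ ((1:ℝ)/2))
        ≤ (1 + ‖z - χ w‖ ^ 2) ^ ((1:ℝ)/2))
    (hFΓ : IntegrableOn (fun w : EuclideanSpace ℝ (Fin (2 * d)) =>
      ‖F w‖ ^ p * (1 + ‖w‖ ^ 2) ^ (p * r / 2)) Γ) :
    IntegrableOn (fun z : EuclideanSpace ℝ (Fin (2 * d)) =>
      (∫ w, (1 + ‖z - χ w‖ ^ 2) ^ (-s / 2) * ‖F w‖) ^ p *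
        (1 + ‖z‖ ^ 2) ^ (p * r / 2)) Γ' := by
  classical
  have hp0 : (0:ℝ) < p := lt_of_lt_of_le one_pos hp
  have hQ0 : ∀ x : EuclideanSpace ℝ (Fin (2 * d)), (0:ℝ) < 1 + ‖x‖^2 := fun x => by positivity
  have hQ1 : ∀ x : EuclideanSpace ℝ (Fin (2 * d)), (1:ℝ) ≤ 1 + ‖x‖^2 :=
    fun x => by nlinarith [sq_nonneg ‖x‖]
  -- continuity of χ
  have hχc : Continuous χ := by
    refine (LipschitzWith.of_dist_le_mul (K := ⟨L, hL.le⟩) fun a b => ?_).continuous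
    rw [dist_eq_norm, dist_eq_norm]; exact hlip a b
  -- the kernel
  set K : EuclideanSpace ℝ (Fin (2 * d)) → ℝ≥0∞ :=
    fun x => ENNReal.ofReal ((1 + ‖x‖^2) ^ ((2*r - s)/2)) with hKdef
  have hKc : Continuous K := by
    rw [hKdef]
    exact ENNReal.continuous_ofReal.comp
      ((continuous_const.add ((continuous_norm).pow 2)).rpow_const
        (fun x => Or.inl (ne_of_gt (hQ0 x))))
  have hKm : Measurable K := hKc.measurable
  have hK0 : ∀ x, K x ≠ 0 := fun x => by
    simp only [hKdef, ne_eq, ENNReal.ofReal_eq_zero, not_le]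
    positivity
  have hKtop : ∀ x, K x ≠ ⊤ := fun x => by simp only [hKdef]; exact ENNReal.ofReal_ne_top
  -- the weighted function g
  set g : EuclideanSpace ℝ (Fin (2 * d)) → ℝ :=
    fun w => (if w ∈ Γ then (1 + ‖w‖^2) ^ (r/2) else (1 + ‖w‖^2) ^ (-r/2)) * ‖F w‖ with hgdef
  have hg_nonneg : ∀ w, 0 ≤ g w := fun w => by
    rw [hgdef]; dsimp only; split <;> positivity
  have hgm : Measurable g := by
    rw [hgdef]
    refine Measurable.mul ?_ hF_meas.norm
    refine Measurable.ite hΓ_open.measurableSet ?_ ?_ <;>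
      exact ((continuous_const.add ((continuous_norm).pow 2)).rpow_const
        (fun x => Or.inl (ne_of_gt (hQ0 x)))).measurable
  set gE : EuclideanSpace ℝ (Fin (2 * d)) → ℝ≥0∞ :=
    fun w => ENNReal.ofReal (g w) with hgEdef
  have hgEm : Measurable gE := by rw [hgEdef]; exact hgm.ennreal_ofReal
  have hgEtop : ∀ w, gE w ≠ ⊤ := fun w => by simp only [hgEdef]; exact ENNReal.ofReal_ne_top
  -- constants
  obtain ⟨C₀, hC₀1, hC₀χ⟩ : ∃ C₀ : ℝ, 1 ≤ C₀ ∧ ∀ w, 1 + ‖χ w‖^2 ≤ C₀ * (1 + ‖w‖^2) := by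
    refine ⟨1 + 2*‖χ 0‖^2 + 2*L^2, by nlinarith [sq_nonneg ‖χ 0‖, sq_nonneg L], fun w => ?_⟩
    have h1 : ‖χ w‖ ≤ L*‖w‖ + ‖χ 0‖ := by
      calc ‖χ w‖ = ‖(χ w - χ 0) + χ 0‖ := by rw [sub_add_cancel]
      _ ≤ ‖χ w - χ 0‖ + ‖χ 0‖ := norm_add_le _ _
      _ ≤ L * ‖w - 0‖ + ‖χ 0‖ := by have := hlip w 0; linarith
      _ = L*‖w‖ + ‖χ 0‖ := by rw [sub_zero]
    have h2 : ‖χ w‖^2 ≤ (L*‖w‖ + ‖χ 0‖)^2 := pow_le_pow_left₀ (norm_nonneg _) h1 2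
    nlinarith [sq_nonneg (L*‖w‖ - ‖χ 0‖), sq_nonneg ‖w‖, sq_nonneg ‖χ 0‖, sq_nonneg L,
      mul_nonneg (mul_nonneg hL.le (norm_nonneg w)) (norm_nonneg (χ 0)),
      mul_nonneg (sq_nonneg ‖χ 0‖) (sq_nonneg ‖w‖), mul_nonneg (sq_nonneg L) (sq_nonneg ‖w‖)]
  obtain ⟨M, hM0, hMl, hMr⟩ : ∃ M : ℝ, 0 < M ∧ (2*C₀)^(r/2) ≤ M ∧ ((c^r)*(c^r))⁻¹ ≤ M :=
    ⟨max ((2*C₀)^(r/2)) (((c^r)*(c^r))⁻¹),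
      lt_of_lt_of_le (Real.rpow_pos_of_pos (by linarith) _) (le_max_left _ _),
      le_max_left _ _, le_max_right _ _⟩
  -- the core pointwise inequality
  have hcore : ∀ z ∈ Γ', ∀ w,
      (1 + ‖z‖^2)^(r/2) * ((1 + ‖z - χ w‖^2)^(-s/2) * ‖F w‖)
        ≤ M * ((1 + ‖z - χ w‖^2)^((2*r-s)/2) * g w) := by
    intro z hz w
    by_cases hw : w ∈ Γ
    · have hgw : g w = (1 + ‖w‖^2)^(r/2) * ‖F w‖ := by
        rw [hgdef]; simp only [hw, if_true]
      rw [hgw]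
      have hPe : 1 + ‖z‖^2 ≤ (2*C₀) * ((1 + ‖z - χ w‖^2) * (1 + ‖w‖^2)) := by
        have h1 := peetre_aux z (χ w)
        have h2 := hC₀χ w
        nlinarith [mul_le_mul_of_nonneg_left h2
          (le_of_lt (by positivity : (0:ℝ) < 2*(1 + ‖z - χ w‖^2)))]
      have h2 : (1 + ‖z‖^2)^(r/2)
          ≤ (2*C₀)^(r/2) * ((1 + ‖z - χ w‖^2)^(r/2) * (1 + ‖w‖^2)^(r/2)) := by
        calc (1 + ‖z‖^2)^(r/2)
            ≤ ((2*C₀) * ((1 + ‖z - χ w‖^2) * (1 + ‖w‖^2)))^(r/2) :=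
              Real.rpow_le_rpow (hQ0 z).le hPe (by positivity)
          _ = _ := by
              rw [Real.mul_rpow (by linarith : (0:ℝ) ≤ 2*C₀) (by positivity),
                Real.mul_rpow (by positivity) (by positivity),
                Real.mul_rpow (by positivity) (by positivity)]
      have hxx : (1 + ‖z - χ w‖^2)^(r/2) * (1 + ‖z - χ w‖^2)^(-s/2)
          = (1 + ‖z - χ w‖^2)^((r-s)/2) := by
        rw [← Real.rpow_add (hQ0 _), show r/2 + -s/2 = (r-s)/2 by ring]
      have hexp1 : (1 + ‖z - χ w‖^2)^((r-s)/2) ≤ (1 + ‖z - χ w‖^2)^((2*r-s)/2) :=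
        Real.rpow_le_rpow_of_exponent_le (hQ1 _) (by linarith)
      calc (1 + ‖z‖^2)^(r/2) * ((1 + ‖z - χ w‖^2)^(-s/2) * ‖F w‖)
          ≤ ((2*C₀)^(r/2) * ((1 + ‖z - χ w‖^2)^(r/2) * (1 + ‖w‖^2)^(r/2)))
              * ((1 + ‖z - χ w‖^2)^(-s/2) * ‖F w‖) :=
            mul_le_mul_of_nonneg_right h2 (by positivity)
        _ = (2*C₀)^(r/2) * (((1 + ‖z - χ w‖^2)^(r/2) * (1 + ‖z - χ w‖^2)^(-s/2))
              * ((1 + ‖w‖^2)^(r/2) * ‖F w‖)) := by ring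
        _ = (2*C₀)^(r/2) * ((1 + ‖z - χ w‖^2)^((r-s)/2) * ((1 + ‖w‖^2)^(r/2) * ‖F w‖)) := by
            rw [hxx]
        _ ≤ (2*C₀)^(r/2) * ((1 + ‖z - χ w‖^2)^((2*r-s)/2) * ((1 + ‖w‖^2)^(r/2) * ‖F w‖)) :=
            mul_le_mul_of_nonneg_left (mul_le_mul_of_nonneg_right hexp1 (by positivity))
              (Real.rpow_nonneg (by linarith) _)
        _ ≤ M * ((1 + ‖z - χ w‖^2)^((2*r-s)/2) * ((1 + ‖w‖^2)^(r/2) * ‖F w‖)) :=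
            mul_le_mul_of_nonneg_right hMl (by positivity)
    · have hgw : g w = (1 + ‖w‖^2)^(-r/2) * ‖F w‖ := by
        rw [hgdef]; simp only [hw, if_false]
      rw [hgw]
      have hsep' := hsep z hz w hw
      have h1 : c * (1 + ‖z‖^2)^((1:ℝ)/2) ≤ (1 + ‖z - χ w‖^2)^((1:ℝ)/2) :=
        le_trans (mul_le_mul_of_nonneg_left (le_max_left _ _) hc.le) hsep'
      have h2 : c * (1 + ‖w‖^2)^((1:ℝ)/2) ≤ (1 + ‖z - χ w‖^2)^((1:ℝ)/2) :=
        le_trans (mul_le_mul_of_nonneg_left (le_max_right _ _) hc.le) hsep'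
      have hhalf : ∀ x : EuclideanSpace ℝ (Fin (2 * d)),
          ((1 + ‖x‖^2)^((1:ℝ)/2))^r = (1 + ‖x‖^2)^(r/2) := by
        intro x
        rw [← Real.rpow_mul (hQ0 x).le, show (1:ℝ)/2*r = r/2 by ring]
      have h1r : c^r * (1 + ‖z‖^2)^(r/2) ≤ (1 + ‖z - χ w‖^2)^(r/2) := by
        have := Real.rpow_le_rpow (by positivity) h1 hr.le
        rwa [Real.mul_rpow hc.le (by positivity), hhalf, hhalf] at this
      have h2r : c^r * (1 + ‖w‖^2)^(r/2) ≤ (1 + ‖z - χ w‖^2)^(r/2) := by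
        have := Real.rpow_le_rpow (by positivity) h2 hr.le
        rwa [Real.mul_rpow hc.le (by positivity), hhalf, hhalf] at this
      have hcr : (0:ℝ) < c^r := Real.rpow_pos_of_pos hc r
      have hbb : (1 + ‖w‖^2)^(r/2) * (1 + ‖w‖^2)^(-r/2) = 1 := by
        rw [← Real.rpow_add (hQ0 w), show r/2 + -r/2 = 0 by ring, Real.rpow_zero]
      have hxxx : (1 + ‖z - χ w‖^2)^(r/2) * (1 + ‖z - χ w‖^2)^(r/2)
            * (1 + ‖z - χ w‖^2)^(-s/2) = (1 + ‖z - χ w‖^2)^((2*r-s)/2) := by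
        rw [← Real.rpow_add (hQ0 _), ← Real.rpow_add (hQ0 _),
          show r/2 + r/2 + -s/2 = (2*r-s)/2 by ring]
      have hexp : (1 + ‖z - χ w‖^2)^((2*r-s)/2) ≤ (1 + ‖z - χ w‖^2)^((2*r-s)/2) :=
        Real.rpow_le_rpow_of_exponent_le (hQ1 _) (by linarith)
      have hKey : (c^r * c^r) * ((1 + ‖z‖^2)^(r/2) * ((1 + ‖z - χ w‖^2)^(-s/2) * ‖F w‖))
          ≤ (1 + ‖z - χ w‖^2)^((2*r-s)/2) * ((1 + ‖w‖^2)^(-r/2) * ‖F w‖) := by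
        calc (c^r * c^r) * ((1 + ‖z‖^2)^(r/2) * ((1 + ‖z - χ w‖^2)^(-s/2) * ‖F w‖))
            = (c^r * (1 + ‖z‖^2)^(r/2)) * ((c^r * (1 + ‖w‖^2)^(r/2))
                * ((1 + ‖w‖^2)^(-r/2) * ((1 + ‖z - χ w‖^2)^(-s/2) * ‖F w‖))) := by
              linear_combination (-(c^r * c^r * (1 + ‖z‖^2)^(r/2)
                * ((1 + ‖z - χ w‖^2)^(-s/2) * ‖F w‖))) * hbb
          _ ≤ ((1 + ‖z - χ w‖^2)^(r/2)) * (((1 + ‖z - χ w‖^2)^(r/2))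
                * ((1 + ‖w‖^2)^(-r/2) * ((1 + ‖z - χ w‖^2)^(-s/2) * ‖F w‖))) := by
              refine mul_le_mul h1r (mul_le_mul_of_nonneg_right h2r (by positivity))
                (by positivity) (by positivity)
          _ = ((1 + ‖z - χ w‖^2)^(r/2) * (1 + ‖z - χ w‖^2)^(r/2)
                * (1 + ‖z - χ w‖^2)^(-s/2)) * ((1 + ‖w‖^2)^(-r/2) * ‖F w‖) := by ring
          _ = (1 + ‖z - χ w‖^2)^((2*r-s)/2) * ((1 + ‖w‖^2)^(-r/2) * ‖F w‖) := by rw [hxxx]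
          _ ≤ (1 + ‖z - χ w‖^2)^((2*r-s)/2) * ((1 + ‖w‖^2)^(-r/2) * ‖F w‖) :=
              mul_le_mul_of_nonneg_right hexp (by positivity)
      have hmul := mul_le_mul_of_nonneg_left hKey
        (le_of_lt (inv_pos.mpr (by positivity : (0:ℝ) < c^r * c^r)))
      rw [← mul_assoc, inv_mul_cancel₀ (by positivity : (c^r * c^r) ≠ 0), one_mul] at hmul
      calc (1 + ‖z‖^2)^(r/2) * ((1 + ‖z - χ w‖^2)^(-s/2) * ‖F w‖)
          ≤ (c^r * c^r)⁻¹ * ((1 + ‖z - χ w‖^2)^((2*r-s)/2)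
              * ((1 + ‖w‖^2)^(-r/2) * ‖F w‖)) := hmul
        _ ≤ M * ((1 + ‖z - χ w‖^2)^((2*r-s)/2) * ((1 + ‖w‖^2)^(-r/2) * ‖F w‖)) :=
            mul_le_mul_of_nonneg_right hMr (by positivity)

  -- ennreal version of the core inequality
  have hcoreE : ∀ z ∈ Γ', ∀ w,
      ENNReal.ofReal ((1 + ‖z - χ w‖^2)^(-s/2) * ‖F w‖)
        ≤ ENNReal.ofReal (M * (1 + ‖z‖^2)^(-r/2)) * (K (z - χ w) * gE w) := by
    intro z hz w
    have h0 : (1 + ‖z‖^2)^(-r/2) * (1 + ‖z‖^2)^(r/2) = 1 := by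
      rw [← Real.rpow_add (hQ0 z), show -r/2 + r/2 = 0 by ring, Real.rpow_zero]
    have hreal : (1 + ‖z - χ w‖^2)^(-s/2) * ‖F w‖
        ≤ (M * (1 + ‖z‖^2)^(-r/2)) * ((1 + ‖z - χ w‖^2)^((2*r-s)/2) * g w) := by
      have h2 := mul_le_mul_of_nonneg_left (hcore z hz w)
        (by positivity : (0:ℝ) ≤ (1 + ‖z‖^2)^(-r/2))
      calc (1 + ‖z - χ w‖^2)^(-s/2) * ‖F w‖
          = (1 + ‖z‖^2)^(-r/2) * ((1 + ‖z‖^2)^(r/2)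
              * ((1 + ‖z - χ w‖^2)^(-s/2) * ‖F w‖)) := by
            rw [← mul_assoc, h0, one_mul]
        _ ≤ (1 + ‖z‖^2)^(-r/2) * (M * ((1 + ‖z - χ w‖^2)^((2*r-s)/2) * g w)) := h2
        _ = _ := by ring
    calc ENNReal.ofReal ((1 + ‖z - χ w‖^2)^(-s/2) * ‖F w‖)
        ≤ ENNReal.ofReal ((M * (1 + ‖z‖^2)^(-r/2))
            * ((1 + ‖z - χ w‖^2)^((2*r-s)/2) * g w)) := ENNReal.ofReal_le_ofReal hreal
      _ = ENNReal.ofReal (M * (1 + ‖z‖^2)^(-r/2)) * (K (z - χ w) * gE w) := by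
          simp only [hKdef, hgEdef]
          rw [← ENNReal.ofReal_mul
              (by positivity : (0:ℝ) ≤ (1 + ‖z - χ w‖^2)^((2*r-s)/2)),
            ← ENNReal.ofReal_mul (mul_nonneg hM0.le (by positivity))]
  -- the two integral transforms
  set Φ : EuclideanSpace ℝ (Fin (2 * d)) → ℝ≥0∞ :=
    fun z => ∫⁻ w, ENNReal.ofReal ((1 + ‖z - χ w‖^2)^(-s/2) * ‖F w‖) with hΦdef
  set Ψ : EuclideanSpace ℝ (Fin (2 * d)) → ℝ≥0∞ :=
    fun z => ∫⁻ w, K (z - χ w) * gE w with hΨdef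
  have hclaimA : ∀ z ∈ Γ', Φ z ≤ ENNReal.ofReal (M * (1 + ‖z‖^2)^(-r/2)) * Ψ z := by
    intro z hz
    simp only [hΦdef, hΨdef]
    rw [← lintegral_const_mul' _ _ ENNReal.ofReal_ne_top]
    exact lintegral_mono fun w => hcoreE z hz w
  -- integrability of the kernel
  have hd0 : (0:ℝ) ≤ 2*(d:ℝ) := by positivity
  have hKint : Integrable (fun x : EuclideanSpace ℝ (Fin (2 * d)) =>
      (1 + ‖x‖^2) ^ ((2*r - s)/2)) := by
    have hdim : (Module.finrank ℝ (EuclideanSpace ℝ (Fin (2 * d))) : ℝ) < s - 2*r := by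
      rw [finrank_euclideanSpace_fin]
      push_cast
      linarith
    have h := integrable_rpow_neg_one_add_norm_sq
      (E := EuclideanSpace ℝ (Fin (2 * d))) (μ := volume) hdim
    simpa [show -(s - 2*r)/2 = (2*r - s)/2 by ring] using h
  set Ik : ℝ≥0∞ := ∫⁻ x : EuclideanSpace ℝ (Fin (2 * d)), K x with hIkdef
  have hIktop : Ik ≠ ⊤ := by
    have heq : Ik = ∫⁻ x : EuclideanSpace ℝ (Fin (2 * d)),
        ENNReal.ofReal ‖(1 + ‖x‖^2) ^ ((2*r - s)/2)‖ := by
      rw [hIkdef]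
      refine lintegral_congr fun x => ?_
      simp only [hKdef]
      rw [Real.norm_eq_abs, abs_of_nonneg (by positivity)]
    rw [heq]
    exact ((hasFiniteIntegral_iff_norm _).mp hKint.2).ne
  have htrans : ∀ u : EuclideanSpace ℝ (Fin (2 * d)), ∫⁻ x, K (x - u) = Ik := by
    intro u
    rw [hIkdef]
    exact (measurePreserving_sub_right volume u).lintegral_comp hKm
  -- uniform bound on the w-integral of the kernel
  obtain ⟨m, hm1, hmL⟩ : ∃ m : ℝ, 1 ≤ m ∧ L ≤ m := ⟨max 1 L, le_max_left _ _, le_max_right _ _⟩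
  have hA_ptwise : ∀ z w u, χ u = z →
      K (z - χ w) ≤ ENNReal.ofReal ((m^2)^((s - 2*r)/2)) * K (w - u) := by
    intro z w u hu
    have hwu : ‖w - u‖ ≤ L * ‖z - χ w‖ := by
      have h := hlip' w u
      rw [hu, norm_sub_rev (χ w) z] at h
      exact h
    have hq : (1 + ‖w - u‖^2) / (m^2) ≤ 1 + ‖z - χ w‖^2 := by
      rw [div_le_iff₀ (by positivity : (0:ℝ) < m^2)]
      have h2 : ‖w - u‖^2 ≤ L^2 * ‖z - χ w‖^2 := by
        nlinarith [norm_nonneg (w - u), norm_nonneg (z - χ w), hwu]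
      nlinarith [sq_nonneg ‖z - χ w‖, hm1, hmL, hL,
        mul_le_mul_of_nonneg_right (mul_le_mul hmL hmL hL.le (by linarith))
          (sq_nonneg ‖z - χ w‖)]
    have hts : (2*r - s)/2 ≤ 0 := by linarith
    have hreal : (1 + ‖z - χ w‖^2)^((2*r - s)/2)
        ≤ (m^2)^((s - 2*r)/2) * (1 + ‖w - u‖^2)^((2*r - s)/2) := by
      have hpos : (0:ℝ) < (1 + ‖w - u‖^2) / m^2 := by positivity
      calc (1 + ‖z - χ w‖^2)^((2*r - s)/2)
          ≤ ((1 + ‖w - u‖^2) / m^2)^((2*r - s)/2) :=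
            Real.rpow_le_rpow_of_nonpos hpos hq hts
        _ = (1 + ‖w - u‖^2)^((2*r - s)/2) / (m^2)^((2*r - s)/2) :=
            Real.div_rpow (by positivity) (by positivity) _
        _ = (m^2)^((s - 2*r)/2) * (1 + ‖w - u‖^2)^((2*r - s)/2) := by
            rw [div_eq_mul_inv, ← Real.rpow_neg (by positivity),
              show -((2*r - s)/2) = (s - 2*r)/2 by ring]
            ring
    simp only [hKdef]
    calc ENNReal.ofReal ((1 + ‖z - χ w‖^2)^((2*r - s)/2))
        ≤ ENNReal.ofReal ((m^2)^((s - 2*r)/2) * (1 + ‖w - u‖^2)^((2*r - s)/2)) :=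
          ENNReal.ofReal_le_ofReal hreal
      _ = _ := ENNReal.ofReal_mul (by positivity)
  set A : ℝ≥0∞ := ENNReal.ofReal ((m^2)^((s - 2*r)/2)) * Ik with hAdef
  have hAtop : A ≠ ⊤ := by
    rw [hAdef]; exact ENNReal.mul_ne_top ENNReal.ofReal_ne_top hIktop
  have hAbound : ∀ z, ∫⁻ w, K (z - χ w) ≤ A := by
    intro z
    obtain ⟨u, hu⟩ := hbij.surjective z
    calc ∫⁻ w, K (z - χ w)
        ≤ ∫⁻ w, ENNReal.ofReal ((m^2)^((s - 2*r)/2)) * K (w - u) :=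
          lintegral_mono fun w => hA_ptwise z w u hu
      _ = ENNReal.ofReal ((m^2)^((s - 2*r)/2)) * ∫⁻ w, K (w - u) :=
          lintegral_const_mul' _ _ ENNReal.ofReal_ne_top
      _ = A := by rw [htrans u, hAdef]
  -- finiteness of the L^p norm of g
  have hGp : ∫⁻ w, gE w ^ p ≠ ⊤ := by
    rw [← lintegral_add_compl (fun w => gE w ^ p) hΓ_open.measurableSet (μ := volume)]
    have hΓpart : ∫⁻ w in Γ, gE w ^ p < ⊤ := by
      have heq : ∫⁻ w in Γ, gE w ^ p
          = ∫⁻ w in Γ, ENNReal.ofReal ‖(‖F w‖^p * (1 + ‖w‖^2)^(p*r/2) : ℝ)‖ := by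
        refine setLIntegral_congr_fun hΓ_open.measurableSet (fun w hw => ?_)
        simp only [hgEdef, hgdef, hw, if_true]
        rw [ENNReal.ofReal_rpow_of_nonneg (by positivity) hp0.le]
        rw [Real.norm_eq_abs, abs_of_nonneg (by positivity)]
        congr 1
        rw [Real.mul_rpow (by positivity) (norm_nonneg _), ← Real.rpow_mul (hQ0 w).le,
          show r/2*p = p*r/2 by ring]
        ring
      rw [heq]
      exact (hasFiniteIntegral_iff_norm _).mp hFΓ.2
    have hΓcpart : ∫⁻ w in Γᶜ, gE w ^ p < ⊤ := by
      have heq : ∫⁻ w in Γᶜ, gE w ^ p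
          = ∫⁻ w in Γᶜ, ENNReal.ofReal ‖(‖F w‖^p * (1 + ‖w‖^2)^(-p*r/2) : ℝ)‖ := by
        refine setLIntegral_congr_fun hΓ_open.measurableSet.compl
          (fun w hw => ?_)
        rw [Set.mem_compl_iff] at hw
        simp only [hgEdef, hgdef, hw, if_false]
        rw [ENNReal.ofReal_rpow_of_nonneg (by positivity) hp0.le]
        rw [Real.norm_eq_abs, abs_of_nonneg (by positivity)]
        congr 1
        rw [Real.mul_rpow (by positivity) (norm_nonneg _), ← Real.rpow_mul (hQ0 w).le,
          show -r/2*p = -p*r/2 by ring]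
        ring
      rw [heq]
      refine lt_of_le_of_lt (setLIntegral_le_lintegral _ _) ?_
      exact (hasFiniteIntegral_iff_norm _).mp hF.2
    exact (ENNReal.add_lt_top.mpr ⟨hΓpart, hΓcpart⟩).ne
  -- Schur / Young estimate
  have hkm_joint : Measurable (Function.uncurry
      (fun z w : EuclideanSpace ℝ (Fin (2 * d)) => K (z - χ w))) := by
    have : Function.uncurry (fun z w : EuclideanSpace ℝ (Fin (2 * d)) => K (z - χ w))
        = K ∘ (fun q : EuclideanSpace ℝ (Fin (2 * d)) × EuclideanSpace ℝ (Fin (2 * d)) =>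
            q.1 - χ q.2) := rfl
    rw [this]
    exact hKm.comp (continuous_fst.sub (hχc.comp continuous_snd)).measurable
  have hS : ∫⁻ z, Ψ z ^ p < ⊤ := by
    simp only [hΨdef]
    exact young_schur volume volume (fun z w => K (z - χ w)) gE p hp hkm_joint hgEm
      (fun z w => hK0 _) (fun z w => hKtop _) hgEtop A hAtop hAbound Ik hIktop
      (fun w => (htrans (χ w)).le) hGp
  -- measurability of the integrand of G
  have hjoint : Measurable fun q : EuclideanSpace ℝ (Fin (2 * d)) ×
      EuclideanSpace ℝ (Fin (2 * d)) => (1 + ‖q.1 - χ q.2‖^2)^(-s/2) * ‖F q.2‖ := by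
    refine Measurable.mul ?_ ((hF_meas.norm).comp measurable_snd)
    exact ((continuous_const.add
      (((continuous_fst.sub (hχc.comp continuous_snd)).norm).pow 2)).rpow_const
        (fun q => Or.inl (ne_of_gt (hQ0 _)))).measurable
  have hGsm : StronglyMeasurable fun z : EuclideanSpace ℝ (Fin (2 * d)) =>
      ∫ w, (1 + ‖z - χ w‖^2)^(-s/2) * ‖F w‖ :=
    hjoint.stronglyMeasurable.integral_prod_right'
  have hGrepr : ∀ z, (∫ w, (1 + ‖z - χ w‖^2)^(-s/2) * ‖F w‖) = (Φ z).toReal := by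
    intro z
    simp only [hΦdef]
    exact integral_eq_lintegral_of_nonneg_ae (ae_of_all _ fun w => by positivity)
      (hjoint.comp measurable_prodMk_left).aestronglyMeasurable
  -- final assembly
  refine ⟨?_, ?_⟩
  · refine Measurable.aestronglyMeasurable (Measurable.mul ?_ ?_)
    · exact hGsm.measurable.pow_const _
    · exact ((continuous_const.add ((continuous_norm).pow 2)).rpow_const
        (fun x => Or.inl (ne_of_gt (hQ0 x)))).measurable
  · rw [hasFiniteIntegral_iff_norm]
    have hpt : ∀ z ∈ Γ', ENNReal.ofReal
        ‖(∫ w, (1 + ‖z - χ w‖^2)^(-s/2) * ‖F w‖)^p * (1 + ‖z‖^2)^(p*r/2)‖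
        ≤ ENNReal.ofReal M ^ p * Ψ z ^ p := by
      intro z hz
      have hGz0 : 0 ≤ ∫ w, (1 + ‖z - χ w‖^2)^(-s/2) * ‖F w‖ :=
        integral_nonneg fun w => by positivity
      rw [Real.norm_eq_abs, abs_of_nonneg (by positivity),
        ENNReal.ofReal_mul (by positivity),
        ← ENNReal.ofReal_rpow_of_nonneg hGz0 hp0.le]
      have h1 : ENNReal.ofReal (∫ w, (1 + ‖z - χ w‖^2)^(-s/2) * ‖F w‖) ≤ Φ z := by
        rw [hGrepr z]; exact ENNReal.ofReal_toReal_le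
      have h2 : ENNReal.ofReal (∫ w, (1 + ‖z - χ w‖^2)^(-s/2) * ‖F w‖)
          ≤ ENNReal.ofReal (M * (1 + ‖z‖^2)^(-r/2)) * Ψ z := h1.trans (hclaimA z hz)
      calc ENNReal.ofReal (∫ w, (1 + ‖z - χ w‖^2)^(-s/2) * ‖F w‖) ^ p
            * ENNReal.ofReal ((1 + ‖z‖^2)^(p*r/2))
          ≤ (ENNReal.ofReal (M * (1 + ‖z‖^2)^(-r/2)) * Ψ z) ^ p
            * ENNReal.ofReal ((1 + ‖z‖^2)^(p*r/2)) :=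
            mul_le_mul_left (ENNReal.rpow_le_rpow h2 hp0.le) _
        _ = (ENNReal.ofReal (M * (1 + ‖z‖^2)^(-r/2)) ^ p
            * ENNReal.ofReal ((1 + ‖z‖^2)^(p*r/2))) * Ψ z ^ p := by
            rw [ENNReal.mul_rpow_of_nonneg _ _ hp0.le]; ring
        _ = ENNReal.ofReal M ^ p * Ψ z ^ p := by
            congr 1
            rw [ENNReal.ofReal_rpow_of_nonneg (mul_nonneg hM0.le (by positivity)) hp0.le,
              ← ENNReal.ofReal_mul (by positivity),
              ENNReal.ofReal_rpow_of_nonneg hM0.le hp0.le]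
            congr 1
            rw [Real.mul_rpow hM0.le (by positivity), mul_assoc,
              ← Real.rpow_mul (hQ0 z).le, ← Real.rpow_add (hQ0 z),
              show -r/2*p + p*r/2 = 0 by ring, Real.rpow_zero, mul_one]
    have hcM : (ENNReal.ofReal M ^ p : ℝ≥0∞) ≠ ⊤ :=
      (ENNReal.rpow_lt_top_of_nonneg hp0.le ENNReal.ofReal_ne_top).ne
    calc ∫⁻ z in Γ', ENNReal.ofReal
          ‖(∫ w, (1 + ‖z - χ w‖^2)^(-s/2) * ‖F w‖)^p * (1 + ‖z‖^2)^(p*r/2)‖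
        ≤ ∫⁻ z in Γ', ENNReal.ofReal M ^ p * Ψ z ^ p := by
          refine lintegral_mono_ae ?_
          exact (ae_restrict_iff' hΓ'_open.measurableSet).2 (ae_of_all _ fun z hz => hpt z hz)
      _ ≤ ∫⁻ z, ENNReal.ofReal M ^ p * Ψ z ^ p := setLIntegral_le_lintegral _ _
      _ = ENNReal.ofReal M ^ p * ∫⁻ z, Ψ z ^ p := lintegral_const_mul' _ _ hcM
      _ < ⊤ := ENNReal.mul_lt_top hcM.lt_top hS
end
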